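/- arXiv:1309.3518 — 4 statements merged into one kernel-verified Lean document; each statement's English description precedes it below -/
import Mathlib

section
/- Let α ∈ [0,1) and ρ > 0. There is a constant C = C(α) > 0, independent of ρ, such that for every measurable function g : (0,∞) → [0,∞), ∫_0^∞ ( ∫_0^t ρ e^{−(t−s)ρ} g(s) ds )² t^{−α} dt ≤ C ∫_0^∞ g(t)² t^{−α} dt. -/
open MeasureTheory Real
open scoped ENNReal NNReal

noncomputable section

/-!
Weighted Schur test with the weight `w(t) = t^{-α}` for the kernel `k(t, s) = ρ e^{-(t-s)ρ}`,
`s < t`. Cauchy–Schwarz against `k(t, ·)` gives `(∫ k g)² ≤ (∫ k w) (∫ k w⁻¹ g²)`.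
The first factor is at most `C w(t)` uniformly in `ρ`: on `s ≤ t/2` the kernel is at most
`ρ e^{-ρt/2} ≤ 2/t`, and `s^{-α}` is integrable at `0` because `α < 1`; on `s > t/2` one has
`s^{-α} ≤ (t/2)^{-α}`, and the kernel has mass at most `1`. After Tonelli, what remains is
`∫_{t>s} k(t, s) w(t)² dt ≤ w(s)²`, because `w` is nonincreasing (`α ≥ 0`) and `k(·, s)` has unit
mass.
-/

namespace MeasureTheory

variable {X : Type*} [MeasurableSpace X] {μ : Measure X}

theorem lintegral_mul_sq_le {f g : X → ℝ≥0∞} (hf : AEMeasurable f μ) (hg : AEMeasurable g μ) :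
    (∫⁻ x, f x * g x ∂μ) ^ 2 ≤ (∫⁻ x, f x ^ 2 ∂μ) * ∫⁻ x, g x ^ 2 ∂μ := by
  have h := ENNReal.lintegral_mul_le_Lp_mul_Lq μ Real.HolderConjugate.two_two hf hg
  simp only [Pi.mul_apply, ENNReal.rpow_two] at h
  calc (∫⁻ x, f x * g x ∂μ) ^ 2
      ≤ ((∫⁻ x, f x ^ 2 ∂μ) ^ (1 / 2 : ℝ) * (∫⁻ x, g x ^ 2 ∂μ) ^ (1 / 2 : ℝ)) ^ 2 := by
        gcongr
    _ = (∫⁻ x, f x ^ 2 ∂μ) * ∫⁻ x, g x ^ 2 ∂μ := by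
        rw [mul_pow, ← ENNReal.rpow_natCast, ← ENNReal.rpow_natCast, ← ENNReal.rpow_mul,
          ← ENNReal.rpow_mul]
        norm_num

theorem lintegral_mul_sq_le_weighted {k w g : X → ℝ≥0∞} (hk : AEMeasurable k μ)
    (hw : AEMeasurable w μ) (hg : AEMeasurable g μ) (hw_pos : ∀ᵐ x ∂μ, w x ≠ 0)
    (hw_fin : ∀ᵐ x ∂μ, w x ≠ ∞) :
    (∫⁻ x, k x * g x ∂μ) ^ 2 ≤ (∫⁻ x, k x * w x ∂μ) * ∫⁻ x, k x * (w x)⁻¹ * g x ^ 2 ∂μ := by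
  set u : X → ℝ≥0∞ := fun x => (k x * w x) ^ (1 / 2 : ℝ)
  set v : X → ℝ≥0∞ := fun x => (k x * (w x)⁻¹) ^ (1 / 2 : ℝ) * g x
  have hsq : ∀ a : ℝ≥0∞, (a ^ (1 / 2 : ℝ)) ^ 2 = a := fun a => by
    rw [← ENNReal.rpow_natCast, ← ENNReal.rpow_mul]; norm_num
  have huv : ∀ᵐ x ∂μ, k x * g x = u x * v x := by
    filter_upwards [hw_pos, hw_fin] with x hx0 hxt
    have : k x * w x * (k x * (w x)⁻¹) = k x ^ 2 := by
      rw [mul_mul_mul_comm, ENNReal.mul_inv_cancel hx0 hxt, mul_one, sq]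
    simp only [u, v, ← mul_assoc, ← ENNReal.mul_rpow_of_nonneg _ _ (by norm_num : (0 : ℝ) ≤ 1 / 2),
      this, ← ENNReal.rpow_natCast, ← ENNReal.rpow_mul]
    norm_num
  have h := lintegral_mul_sq_le (μ := μ) (f := u) (g := v) (by fun_prop) (by fun_prop)
  simp only [u, v, mul_pow, hsq] at h
  rwa [lintegral_congr_ae huv]

theorem lintegral_sq_kernel_mul_le_of_schur [SFinite μ] {K : X → X → ℝ≥0∞}
    (hK : Measurable (Function.uncurry K)) {w g : X → ℝ≥0∞} (hw : Measurable w)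
    (hg : Measurable g) (hw_pos : ∀ᵐ x ∂μ, w x ≠ 0) (hw_fin : ∀ᵐ x ∂μ, w x ≠ ∞) {C D : ℝ≥0∞}
    (hC : ∀ᵐ t ∂μ, ∫⁻ s, K t s * w s ∂μ ≤ C * w t)
    (hD : ∀ᵐ s ∂μ, ∫⁻ t, K t s * w t ^ 2 ∂μ ≤ D * w s ^ 2) :
    ∫⁻ t, (∫⁻ s, K t s * g s ∂μ) ^ 2 * w t ∂μ ≤ C * D * ∫⁻ t, g t ^ 2 * w t ∂μ := by
  have hintegrand : Measurable fun p : X × X => K p.1 p.2 * (w p.2)⁻¹ * g p.2 ^ 2 * w p.1 ^ 2 := by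
    fun_prop
  calc ∫⁻ t, (∫⁻ s, K t s * g s ∂μ) ^ 2 * w t ∂μ
      ≤ ∫⁻ t, C * ∫⁻ s, K t s * (w s)⁻¹ * g s ^ 2 * w t ^ 2 ∂μ ∂μ := by
        refine lintegral_mono_ae ?_
        filter_upwards [hC] with t ht
        calc (∫⁻ s, K t s * g s ∂μ) ^ 2 * w t
            ≤ (∫⁻ s, K t s * w s ∂μ) * (∫⁻ s, K t s * (w s)⁻¹ * g s ^ 2 ∂μ) * w t := by
              gcongr
              exact lintegral_mul_sq_le_weighted hK.of_uncurry_left.aemeasurable hw.aemeasurable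
                hg.aemeasurable hw_pos hw_fin
          _ ≤ C * w t * (∫⁻ s, K t s * (w s)⁻¹ * g s ^ 2 ∂μ) * w t := by gcongr
          _ = C * ∫⁻ s, K t s * (w s)⁻¹ * g s ^ 2 * w t ^ 2 ∂μ := by
              rw [lintegral_mul_const _ (by fun_prop)]
              ring
    _ = C * ∫⁻ s, (w s)⁻¹ * g s ^ 2 * ∫⁻ t, K t s * w t ^ 2 ∂μ ∂μ := by
        rw [lintegral_const_mul _ hintegrand.lintegral_prod_right',
          lintegral_lintegral_swap hintegrand.aemeasurable]
        congr 1
        refine lintegral_congr fun s => ?_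
        rw [← lintegral_const_mul _ (by fun_prop)]
        exact lintegral_congr fun t => by ring
    _ ≤ C * ∫⁻ s, (w s)⁻¹ * g s ^ 2 * (D * w s ^ 2) ∂μ := by
        gcongr C * ?_
        refine lintegral_mono_ae ?_
        filter_upwards [hD] with s hs
        gcongr
    _ = C * D * ∫⁻ t, g t ^ 2 * w t ∂μ := by
        rw [mul_assoc C D, ← lintegral_const_mul D (by fun_prop)]
        congr 1
        refine lintegral_congr_ae ?_
        filter_upwards [hw_pos, hw_fin] with s hs0 hst
        calc (w s)⁻¹ * g s ^ 2 * (D * w s ^ 2) = D * (g s ^ 2 * w s) * ((w s)⁻¹ * w s) := by ring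
          _ = D * (g s ^ 2 * w s) := by rw [ENNReal.inv_mul_cancel hs0 hst, mul_one]

end MeasureTheory

section ExpKernel

variable {ρ α : ℝ}

theorem lintegral_Ioi_exp_kernel (hρ : 0 < ρ) (s : ℝ) :
    ∫⁻ t in Set.Ioi s, ENNReal.ofReal (ρ * exp (-(t - s) * ρ)) = 1 := by
  have hform : ∀ t, ρ * exp (-(t - s) * ρ) = ρ * exp (s * ρ) * exp (-ρ * t) := fun t => by
    rw [mul_assoc, ← exp_add]; ring_nf
  simp_rw [hform]
  rw [← ofReal_integral_eq_lintegral_ofReal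
      ((integrableOn_exp_mul_Ioi (by linarith) s).const_mul _) (ae_of_all _ fun _ => by positivity),
    integral_const_mul, integral_exp_mul_Ioi (by linarith)]
  field_simp
  simp [← exp_add]

theorem lintegral_Iic_exp_kernel (hρ : 0 < ρ) (t : ℝ) :
    ∫⁻ s in Set.Iic t, ENNReal.ofReal (ρ * exp (-(t - s) * ρ)) = 1 := by
  have hform : ∀ s, ρ * exp (-(t - s) * ρ) = ρ * exp (-(t * ρ)) * exp (ρ * s) := fun s => by
    rw [mul_assoc, ← exp_add]; ring_nf
  simp_rw [hform]
  rw [← ofReal_integral_eq_lintegral_ofReal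
      ((integrableOn_exp_mul_Iic hρ t).const_mul _) (ae_of_all _ fun _ => by positivity),
    integral_const_mul, integral_exp_mul_Iic hρ]
  field_simp
  simp [← exp_add]

theorem lintegral_Ioi_exp_kernel_mul_le (hρ : 0 < ρ) {s : ℝ} {H : ℝ → ℝ≥0∞}
    (hH : ∀ t, s < t → H t ≤ H s) :
    ∫⁻ t in Set.Ioi s, ENNReal.ofReal (ρ * exp (-(t - s) * ρ)) * H t ≤ H s :=
  calc ∫⁻ t in Set.Ioi s, ENNReal.ofReal (ρ * exp (-(t - s) * ρ)) * H t
      ≤ ∫⁻ t in Set.Ioi s, ENNReal.ofReal (ρ * exp (-(t - s) * ρ)) * H s :=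
        setLIntegral_mono' measurableSet_Ioi fun t ht => by gcongr; exact hH t ht
    _ = H s := by rw [lintegral_mul_const _ (by fun_prop), lintegral_Ioi_exp_kernel hρ, one_mul]

theorem lintegral_Ioc_rpow_neg (hα : α < 1) {b : ℝ} (hb : 0 ≤ b) :
    ∫⁻ s in Set.Ioc 0 b, ENNReal.ofReal (s ^ (-α)) = ENNReal.ofReal (b ^ (1 - α) / (1 - α)) := by
  rw [← ofReal_integral_eq_lintegral_ofReal
      (intervalIntegral.intervalIntegrable_rpow' (by linarith)).1
      ((ae_restrict_mem measurableSet_Ioc).mono fun s hs => rpow_nonneg hs.1.le _),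
    ← intervalIntegral.integral_of_le hb, integral_rpow (Or.inl (by linarith)),
    zero_rpow (by linarith), sub_zero, neg_add_eq_sub]

theorem lintegral_Ioc_exp_kernel_mul_rpow_le (hρ : 0 ≤ ρ) (hα : α < 1) {b t : ℝ}
    (hb : 0 < b) (hbt : 2 * b ≤ t) :
    ∫⁻ s in Set.Ioc 0 b, ENNReal.ofReal (ρ * exp (-(t - s) * ρ)) * ENNReal.ofReal (s ^ (-α)) ≤
      ENNReal.ofReal (b ^ (-α) / (1 - α)) := by
  calc ∫⁻ s in Set.Ioc 0 b, ENNReal.ofReal (ρ * exp (-(t - s) * ρ)) * ENNReal.ofReal (s ^ (-α))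
      ≤ ∫⁻ s in Set.Ioc 0 b, ENNReal.ofReal (ρ * exp (-(b * ρ))) * ENNReal.ofReal (s ^ (-α)) :=
        setLIntegral_mono' measurableSet_Ioc fun s hs => by
          gcongr ENNReal.ofReal (ρ * exp ?_) * _
          nlinarith [hs.2]
    _ = ENNReal.ofReal (b * ρ * exp (-(b * ρ)) * (b ^ (-α) / (1 - α))) := by
        rw [lintegral_const_mul' _ _ ENNReal.ofReal_ne_top, lintegral_Ioc_rpow_neg hα hb.le,
          ← ENNReal.ofReal_mul (by positivity), sub_eq_add_neg, rpow_add hb, rpow_one]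
        ring_nf
    _ ≤ ENNReal.ofReal (b ^ (-α) / (1 - α)) := by
        gcongr
        calc b * ρ * exp (-(b * ρ)) * (b ^ (-α) / (1 - α)) ≤ 1 * (b ^ (-α) / (1 - α)) := by
              gcongr
              exact (mul_exp_neg_le_exp_neg_one _).trans (exp_le_one_iff.mpr (by norm_num))
          _ = b ^ (-α) / (1 - α) := one_mul _

theorem lintegral_Ioo_exp_kernel_mul_rpow_le_rpow (hρ : 0 < ρ) (hα : 0 ≤ α) {b t : ℝ}
    (hb : 0 < b) :
    ∫⁻ s in Set.Ioo b t, ENNReal.ofReal (ρ * exp (-(t - s) * ρ)) * ENNReal.ofReal (s ^ (-α)) ≤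
      ENNReal.ofReal (b ^ (-α)) :=
  calc ∫⁻ s in Set.Ioo b t, ENNReal.ofReal (ρ * exp (-(t - s) * ρ)) * ENNReal.ofReal (s ^ (-α))
      ≤ ∫⁻ s in Set.Ioo b t, ENNReal.ofReal (ρ * exp (-(t - s) * ρ)) * ENNReal.ofReal (b ^ (-α)) :=
        setLIntegral_mono' measurableSet_Ioo fun s hs => by
          gcongr _ * ENNReal.ofReal ?_
          exact rpow_le_rpow_of_nonpos hb hs.1.le (by linarith)
    _ ≤ (∫⁻ s in Set.Iic t, ENNReal.ofReal (ρ * exp (-(t - s) * ρ))) *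
          ENNReal.ofReal (b ^ (-α)) := by
        rw [lintegral_mul_const' _ _ ENNReal.ofReal_ne_top]
        gcongr
        exact Set.Ioo_subset_Iio_self.trans Set.Iio_subset_Iic_self
    _ = ENNReal.ofReal (b ^ (-α)) := by rw [lintegral_Iic_exp_kernel hρ, one_mul]

theorem lintegral_Ioo_zero_exp_kernel_mul_rpow_le (hρ : 0 < ρ) (hα0 : 0 ≤ α)
    (hα1 : α < 1) {t : ℝ} (ht : 0 < t) :
    ∫⁻ s in Set.Ioo 0 t, ENNReal.ofReal (ρ * exp (-(t - s) * ρ)) * ENNReal.ofReal (s ^ (-α)) ≤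
      ENNReal.ofReal (2 ^ α * (1 + (1 - α)⁻¹)) * ENNReal.ofReal (t ^ (-α)) := by
  have hb : 0 < t / 2 := by positivity
  have hhalf : (t / 2) ^ (-α) = 2 ^ α * t ^ (-α) := by
    rw [div_rpow ht.le zero_le_two, rpow_neg zero_le_two, div_eq_mul_inv, inv_inv, mul_comm]
  calc ∫⁻ s in Set.Ioo 0 t, ENNReal.ofReal (ρ * exp (-(t - s) * ρ)) * ENNReal.ofReal (s ^ (-α))
      ≤ ENNReal.ofReal ((t / 2) ^ (-α) / (1 - α)) + ENNReal.ofReal ((t / 2) ^ (-α)) := by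
        rw [← Set.Ioc_union_Ioo_eq_Ioo hb.le (by linarith)]
        refine (lintegral_union_le _ _ _).trans (add_le_add ?_ ?_)
        · exact lintegral_Ioc_exp_kernel_mul_rpow_le hρ.le hα1 hb (by linarith)
        · exact lintegral_Ioo_exp_kernel_mul_rpow_le_rpow hρ hα0 hb
    _ = ENNReal.ofReal (2 ^ α * (1 + (1 - α)⁻¹)) * ENNReal.ofReal (t ^ (-α)) := by
        rw [← ENNReal.ofReal_add (by positivity) (by positivity),
          ← ENNReal.ofReal_mul (by positivity), hhalf]
        ring_nf

end ExpKernel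

def causalExpKernel (ρ t s : ℝ) : ℝ≥0∞ :=
  if s < t then ENNReal.ofReal (ρ * exp (-(t - s) * ρ)) else 0

theorem measurable_causalExpKernel (ρ : ℝ) : Measurable (Function.uncurry (causalExpKernel ρ)) :=
  Measurable.ite (measurableSet_lt measurable_snd measurable_fst) (by fun_prop) measurable_const

theorem setLIntegral_Ioi_causalExpKernel_mul (ρ t : ℝ) (G : ℝ → ℝ≥0∞) :
    ∫⁻ s in Set.Ioi 0, causalExpKernel ρ t s * G s =
      ∫⁻ s in Set.Ioo 0 t, ENNReal.ofReal (ρ * exp (-(t - s) * ρ)) * G s := by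
  rw [← Set.Ioi_inter_Iio, Set.inter_comm, ← setLIntegral_indicator measurableSet_Iio]
  refine lintegral_congr fun s => ?_
  by_cases hs : s < t <;> simp [causalExpKernel, hs]

theorem setLIntegral_Ioi_causalExpKernel_mul_le (ρ s : ℝ) (H : ℝ → ℝ≥0∞) :
    ∫⁻ t in Set.Ioi 0, causalExpKernel ρ t s * H t ≤
      ∫⁻ t in Set.Ioi s, ENNReal.ofReal (ρ * exp (-(t - s) * ρ)) * H t := by
  calc ∫⁻ t in Set.Ioi 0, causalExpKernel ρ t s * H t
      = ∫⁻ t in Set.Ioi 0,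
          (Set.Ioi s).indicator (fun t => ENNReal.ofReal (ρ * exp (-(t - s) * ρ)) * H t) t :=
        lintegral_congr fun t => by by_cases hst : s < t <;> simp [causalExpKernel, hst]
    _ = ∫⁻ t in Set.Ioi s ∩ Set.Ioi 0, ENNReal.ofReal (ρ * exp (-(t - s) * ρ)) * H t :=
        setLIntegral_indicator measurableSet_Ioi _
    _ ≤ _ := lintegral_mono_set Set.inter_subset_left

/-- The scalar Schur-test inequality: for `α ∈ [0,1)` there is `C = C(α) > 0`,
independent of `ρ > 0`, such that for every measurable `g : (0,∞) → [0,∞)`,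
`∫_0^∞ (∫_0^t ρ e^{−(t−s)ρ} g(s) ds)² t^{−α} dt ≤ C ∫_0^∞ g(t)² t^{−α} dt`. -/
theorem schur_scalar_bound (α : ℝ) (hα0 : 0 ≤ α) (hα1 : α < 1) :
    ∃ C > (0 : ℝ), ∀ ρ > (0 : ℝ), ∀ g : ℝ → ℝ, Measurable g → (∀ t, 0 ≤ g t) →
      ∫⁻ t in Set.Ioi (0 : ℝ),
          (∫⁻ s in Set.Ioo (0 : ℝ) t,
            ENNReal.ofReal (ρ * Real.exp (-(t - s) * ρ) * g s)) ^ 2 *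
          ENNReal.ofReal (t ^ (-α)) ≤
        ENNReal.ofReal C *
          ∫⁻ t in Set.Ioi (0 : ℝ),
            ENNReal.ofReal (g t) ^ 2 * ENNReal.ofReal (t ^ (-α)) := by
  refine ⟨2 ^ α * (1 + (1 - α)⁻¹), by positivity, fun ρ hρ g hg _ => ?_⟩
  set w : ℝ → ℝ≥0∞ := fun t => ENNReal.ofReal (t ^ (-α))
  have hw_pos : ∀ᵐ t ∂volume.restrict (Set.Ioi 0), w t ≠ 0 := by
    filter_upwards [ae_restrict_mem measurableSet_Ioi] with t ht
    exact (ENNReal.ofReal_pos.mpr (rpow_pos_of_pos ht _)).ne'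
  have hC : ∀ᵐ t ∂volume.restrict (Set.Ioi 0),
      ∫⁻ s in Set.Ioi 0, causalExpKernel ρ t s * w s ≤
        ENNReal.ofReal (2 ^ α * (1 + (1 - α)⁻¹)) * w t := by
    filter_upwards [ae_restrict_mem measurableSet_Ioi] with t ht
    rw [setLIntegral_Ioi_causalExpKernel_mul]
    exact lintegral_Ioo_zero_exp_kernel_mul_rpow_le hρ hα0 hα1 ht
  have hD : ∀ᵐ s ∂volume.restrict (Set.Ioi 0),
      ∫⁻ t in Set.Ioi 0, causalExpKernel ρ t s * w t ^ 2 ≤ 1 * w s ^ 2 := by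
    filter_upwards [ae_restrict_mem measurableSet_Ioi] with s hs
    rw [one_mul]
    refine (setLIntegral_Ioi_causalExpKernel_mul_le ρ s _).trans
      (lintegral_Ioi_exp_kernel_mul_le hρ fun t hst => ?_)
    exact pow_le_pow_left' (ENNReal.ofReal_le_ofReal
      (rpow_le_rpow_of_nonpos hs hst.le (by linarith))) 2
  have hinner : ∀ t, ∫⁻ s in Set.Ioi 0, causalExpKernel ρ t s * ENNReal.ofReal (g s) =
      ∫⁻ s in Set.Ioo 0 t, ENNReal.ofReal (ρ * exp (-(t - s) * ρ) * g s) := fun t => by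
    rw [setLIntegral_Ioi_causalExpKernel_mul]
    simp_rw [ENNReal.ofReal_mul (by positivity : (0 : ℝ) ≤ ρ * exp _)]
  simpa only [hinner, mul_one] using lintegral_sq_kernel_mul_le_of_schur
    (measurable_causalExpKernel ρ) (by fun_prop) hg.ennreal_ofReal hw_pos
    (ae_of_all _ fun _ => ENNReal.ofReal_ne_top) hC hD

end
end

section
/- Let n ≥ 2. There is a constant C = C(n) > 0 such that for every f ∈ L²_{loc}(ℝⁿ) with ‖f‖_{L_{2,n−2}} < ∞ and every t > 0, the heat extension e^{tΔ}f is defined a.e. and ‖e^{tΔ}f‖_{L_{2,n−2}} ≤ C ‖f‖_{L_{2,n−2}}; i.e., the heat semigroup is uniformly bounded on the square Morrey space L_{2,n−2}. -/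
/-!
The heat kernel `K_t` is a probability density, so Cauchy–Schwarz gives the pointwise bound
`|e^{tΔ}f|² ≤ K_t * |f|²`. Integrating `K_t * |f|²` over a ball `B(x, r)` and exchanging the
integrals writes it as a `K_t`-average of the integrals of `|f|²` over the translated balls
`B(x - w, r)`, each at most `r^{n-2} ‖f‖²_{L_{2,n-2}}`; hence `C = 1` works. The same bound
shows that `K_t * |f|²` is finite almost everywhere, which gives the integrability of
`K_t(x - ·) f` for almost every `x`.
-/

open MeasureTheory Metric Real
open scoped ENNReal NNReal

noncomputable section

/-- The heat extension `e^{tΔ}f` of a function `f : ℝⁿ → ℂ`. -/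
def heatExt (n : ℕ) (f : EuclideanSpace ℝ (Fin n) → ℂ) (t : ℝ)
    (x : EuclideanSpace ℝ (Fin n)) : ℂ :=
  ∫ y, ((4 * π * t) ^ (-(n : ℝ) / 2) * Real.exp (-‖x - y‖ ^ 2 / (4 * t))) • f y

/-- The square Morrey norm `‖f‖_{L_{2,n−2}}`. -/
def MorreyNorm (n : ℕ) (f : EuclideanSpace ℝ (Fin n) → ℂ) : ℝ≥0∞ :=
  ⨆ (r : ℝ) (_ : 0 < r) (x : EuclideanSpace ℝ (Fin n)),
    (ENNReal.ofReal (r ^ ((2 : ℝ) - (n : ℝ))) *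
      ∫⁻ y in Metric.ball x r, (‖f y‖₊ : ℝ≥0∞) ^ 2) ^ (1 / 2 : ℝ)

theorem lintegral_mul_sq_le_lintegral_mul_lintegral_mul_sq {α : Type*} [MeasurableSpace α]
    {μ : Measure α} {k h : α → ℝ≥0∞} (hk : AEMeasurable k μ) (hh : AEMeasurable h μ) :
    (∫⁻ a, k a * h a ∂μ) ^ 2 ≤ (∫⁻ a, k a ∂μ) * ∫⁻ a, k a * h a ^ 2 ∂μ := by
  have hsqrt : ∀ x : ℝ≥0∞, (x ^ (2⁻¹ : ℝ)) ^ 2 = x := fun x => by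
    rw [← ENNReal.rpow_two, ENNReal.rpow_inv_rpow two_ne_zero]
  have holder := ENNReal.lintegral_mul_le_Lp_mul_Lq μ Real.HolderConjugate.two_two
    (hk.pow_const (2⁻¹ : ℝ)) ((hk.pow_const (2⁻¹ : ℝ)).mul hh)
  simp only [Pi.mul_apply, ENNReal.rpow_two, mul_pow, hsqrt, one_div] at holder
  calc (∫⁻ a, k a * h a ∂μ) ^ 2 = (∫⁻ a, k a ^ (2⁻¹ : ℝ) * (k a ^ (2⁻¹ : ℝ) * h a) ∂μ) ^ 2 := by
        simp_rw [← mul_assoc, ← pow_two, hsqrt]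
    _ ≤ ((∫⁻ a, k a ∂μ) ^ (2⁻¹ : ℝ) * (∫⁻ a, k a * h a ^ 2 ∂μ) ^ (2⁻¹ : ℝ)) ^ 2 := by gcongr
    _ = (∫⁻ a, k a ∂μ) * ∫⁻ a, k a * h a ^ 2 ∂μ := by rw [mul_pow, hsqrt, hsqrt]

theorem ae_lt_top_of_setLIntegral_ball_ne_top {X : Type*} [PseudoMetricSpace X]
    [MeasurableSpace X] {μ : Measure X} {F : X → ℝ≥0∞} (hF : AEMeasurable F μ) (x : X)
    (h : ∀ r > 0, ∫⁻ y in ball x r, F y ∂μ ≠ ⊤) : ∀ᵐ y ∂μ, F y < ⊤ := by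
  rw [← Measure.restrict_univ (μ := μ), ← iUnion_ball_nat_succ x, ae_restrict_iUnion_iff]
  exact fun m => ae_lt_top' hF.restrict (h _ (by positivity))

section Convolution

variable {G : Type*} [NormedAddCommGroup G] [MeasurableSpace G] [MeasurableAdd₂ G]
  [MeasurableNeg G] [OpensMeasurableSpace G] {μ : Measure G} [μ.IsAddLeftInvariant]
  [μ.IsNegInvariant] [SFinite μ]

theorem setLIntegral_ball_lintegral_mul_le {K g : G → ℝ≥0∞} (hK : Measurable K)
    (hg : Measurable g) {r : ℝ} {B : ℝ≥0∞} (hB : ∀ x, ∫⁻ y in ball x r, g y ∂μ ≤ B) (x₀ : G) :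
    ∫⁻ z in ball x₀ r, ∫⁻ y, K (z - y) * g y ∂μ ∂μ ≤ (∫⁻ w, K w ∂μ) * B := by
  have hreflect : ∀ z, ∫⁻ y, K (z - y) * g y ∂μ = ∫⁻ w, K w * g (z - w) ∂μ := fun z => by
    rw [← lintegral_sub_left_eq_self _ z]
    simp_rw [sub_sub_cancel]
  have htrans : ∀ w, ∫⁻ z in ball x₀ r, g (z - w) ∂μ = ∫⁻ y in ball (x₀ - w) r, g y ∂μ :=
    fun w => by
      rw [← (measurePreserving_sub_right μ w).setLIntegral_comp_preimage measurableSet_ball hg]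
      simp [sub_eq_add_neg]
  calc ∫⁻ z in ball x₀ r, ∫⁻ y, K (z - y) * g y ∂μ ∂μ
      = ∫⁻ z in ball x₀ r, ∫⁻ w, K w * g (z - w) ∂μ ∂μ := by simp_rw [hreflect]
    _ = ∫⁻ w, ∫⁻ z in ball x₀ r, K w * g (z - w) ∂μ ∂μ :=
        lintegral_lintegral_swap (by fun_prop)
    _ = ∫⁻ w, K w * ∫⁻ y in ball (x₀ - w) r, g y ∂μ ∂μ := by
        congr with w
        rw [lintegral_const_mul _ (by fun_prop), htrans]
    _ ≤ ∫⁻ w, K w * B ∂μ := by gcongr with w; exact hB _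
    _ = (∫⁻ w, K w ∂μ) * B := lintegral_mul_const _ hK

end Convolution

section HeatKernel

/-- `heatExt n f t x` is `∫ y, heatKernel n t (x - y) • f y` by definition. -/
def heatKernel (n : ℕ) (t : ℝ) (z : EuclideanSpace ℝ (Fin n)) : ℝ :=
  (4 * π * t) ^ (-(n : ℝ) / 2) * rexp (-‖z‖ ^ 2 / (4 * t))

variable {n : ℕ} {t : ℝ}

theorem heatKernel_nonneg (ht : 0 ≤ t) (z : EuclideanSpace ℝ (Fin n)) :
    0 ≤ heatKernel n t z := by
  unfold heatKernel; positivity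

@[fun_prop]
theorem continuous_heatKernel : Continuous (heatKernel n t) := by
  unfold heatKernel; fun_prop

theorem integral_heatKernel (ht : 0 < t) : ∫ z, heatKernel n t z = 1 := by
  have hb : 0 < 1 / (4 * t) := by positivity
  simp_rw [heatKernel, integral_const_mul]
  rw [show (fun z : EuclideanSpace ℝ (Fin n) => rexp (-‖z‖ ^ 2 / (4 * t)))
      = fun z => rexp (-(1 / (4 * t)) * ‖z‖ ^ 2) by ext; ring_nf,
    GaussianFourier.integral_rexp_neg_mul_sq_norm hb, finrank_euclideanSpace_fin,
    show π / (1 / (4 * t)) = 4 * π * t by field_simp, ← rpow_add (by positivity), neg_div,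
    neg_add_cancel, rpow_zero]

theorem lintegral_ofReal_heatKernel (ht : 0 < t) :
    ∫⁻ z, ENNReal.ofReal (heatKernel n t z) = 1 := by
  have hint : Integrable (heatKernel n t) :=
    Integrable.of_integral_ne_zero (by rw [integral_heatKernel ht]; exact one_ne_zero)
  rw [← ofReal_integral_eq_lintegral_ofReal hint (.of_forall (heatKernel_nonneg ht.le)),
    integral_heatKernel ht, ENNReal.ofReal_one]

theorem lintegral_enorm_heatKernel_smul_sq_le {F : Type*} [NormedAddCommGroup F]
    [NormedSpace ℝ F] (ht : 0 < t) {f : EuclideanSpace ℝ (Fin n) → F}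
    (hf : AEStronglyMeasurable f) (x : EuclideanSpace ℝ (Fin n)) :
    (∫⁻ y, ‖heatKernel n t (x - y) • f y‖ₑ) ^ 2 ≤
      ∫⁻ y, ENNReal.ofReal (heatKernel n t (x - y)) * ‖f y‖ₑ ^ 2 := by
  have hmass : ∫⁻ y, ENNReal.ofReal (heatKernel n t (x - y)) = 1 := by
    rw [lintegral_sub_left_eq_self (fun z => ENNReal.ofReal (heatKernel n t z)) x,
      lintegral_ofReal_heatKernel ht]
  simp_rw [enorm_smul, enorm_of_nonneg (heatKernel_nonneg ht.le _)]
  simpa [hmass] using lintegral_mul_sq_le_lintegral_mul_lintegral_mul_sq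
    (by fun_prop : Measurable fun y => ENNReal.ofReal (heatKernel n t (x - y))).aemeasurable
    hf.enorm

end HeatKernel

theorem morreyNorm_le_iff {n : ℕ} {f : EuclideanSpace ℝ (Fin n) → ℂ} {B : ℝ≥0∞} :
    MorreyNorm n f ≤ B ↔ ∀ r > 0, ∀ x,
      ∫⁻ y in ball x r, ‖f y‖ₑ ^ 2 ≤ ENNReal.ofReal (r ^ ((n : ℝ) - 2)) * B ^ 2 := by
  simp only [MorreyNorm, iSup_le_iff, one_div, ENNReal.rpow_inv_le_iff two_pos, ENNReal.rpow_two]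
  refine forall₂_congr fun r hr => forall_congr' fun x => ?_
  have hpos : 0 < r ^ ((n : ℝ) - 2) := rpow_pos_of_pos hr _
  rw [show ENNReal.ofReal (r ^ ((2 : ℝ) - n)) = (ENNReal.ofReal (r ^ ((n : ℝ) - 2)))⁻¹ by
      rw [← ENNReal.ofReal_inv_of_pos hpos, ← rpow_neg hr.le, neg_sub],
    ENNReal.mul_le_iff_le_inv (ENNReal.inv_ne_zero.2 ENNReal.ofReal_ne_top)
      (ENNReal.inv_ne_top.2 (ENNReal.ofReal_pos.2 hpos).ne'), inv_inv]
  rfl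

theorem heat_semigroup_morrey_bounded_general (n : ℕ) :
    ∃ C > (0 : ℝ), ∀ f : EuclideanSpace ℝ (Fin n) → ℂ,
      Measurable f → LocallyIntegrable (fun y => ‖f y‖ ^ 2) volume →
      MorreyNorm n f ≠ ⊤ → ∀ t > (0 : ℝ),
        (∀ᵐ x : EuclideanSpace ℝ (Fin n),
          Integrable (fun y =>
            ((4 * π * t) ^ (-(n : ℝ) / 2) * Real.exp (-‖x - y‖ ^ 2 / (4 * t))) • f y)) ∧
        MorreyNorm n (heatExt n f t) ≤ ENNReal.ofReal C * MorreyNorm n f := by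
  refine ⟨1, one_pos, fun f hf _ hM t ht => ?_⟩
  set F := fun z => ∫⁻ y, ENNReal.ofReal (heatKernel n t (z - y)) * ‖f y‖ₑ ^ 2
  have hpt : ∀ x, (∫⁻ y, ‖heatKernel n t (x - y) • f y‖ₑ) ^ 2 ≤ F x :=
    lintegral_enorm_heatKernel_smul_sq_le ht hf.aestronglyMeasurable
  have hball : ∀ r > 0, ∀ x, ∫⁻ z in ball x r, F z ≤
      ENNReal.ofReal (r ^ ((n : ℝ) - 2)) * MorreyNorm n f ^ 2 := fun r hr x =>
    (setLIntegral_ball_lintegral_mul_le (K := fun z => ENNReal.ofReal (heatKernel n t z))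
      (g := fun y => ‖f y‖ₑ ^ 2) (by fun_prop) (by fun_prop)
      (morreyNorm_le_iff.1 le_rfl r hr) x).trans_eq
      (by rw [lintegral_ofReal_heatKernel ht, one_mul])
  have hF : ∀ᵐ x, F x < ⊤ :=
    ae_lt_top_of_setLIntegral_ball_ne_top (by fun_prop) 0 fun r hr =>
      ((hball r hr 0).trans_lt (ENNReal.mul_lt_top ENNReal.ofReal_lt_top
        (ENNReal.pow_lt_top hM.lt_top))).ne
  refine ⟨hF.mono fun x hx => ⟨by fun_prop, ?_⟩, ?_⟩
  · exact (ENNReal.pow_lt_top_iff.1 ((hpt x).trans_lt hx)).resolve_right two_ne_zero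
  · rw [ENNReal.ofReal_one, one_mul, morreyNorm_le_iff]
    refine fun r hr x => le_trans (setLIntegral_mono' measurableSet_ball fun z _ => ?_)
      (hball r hr x)
    exact (pow_le_pow_left' (enorm_integral_le_lintegral_enorm _) 2).trans (hpt z)

/-- The heat semigroup is uniformly bounded on the square Morrey space `L_{2,n−2}`:
for `f ∈ L²_loc` with finite Morrey norm and `t > 0`, the heat extension is
defined a.e. and `‖e^{tΔ}f‖_{L_{2,n−2}} ≤ C ‖f‖_{L_{2,n−2}}`. -/
theorem heat_semigroup_morrey_bounded (n : ℕ) (hn : 2 ≤ n) :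
    ∃ C > (0 : ℝ), ∀ f : EuclideanSpace ℝ (Fin n) → ℂ,
      Measurable f → LocallyIntegrable (fun y => ‖f y‖ ^ 2) volume →
      MorreyNorm n f ≠ ⊤ → ∀ t > (0 : ℝ),
        (∀ᵐ x : EuclideanSpace ℝ (Fin n),
          Integrable (fun y =>
            ((4 * π * t) ^ (-(n : ℝ) / 2) * Real.exp (-‖x - y‖ ^ 2 / (4 * t))) • f y)) ∧
        MorreyNorm n (heatExt n f t) ≤ ENNReal.ofReal C * MorreyNorm n f :=
  heat_semigroup_morrey_bounded_general n
end
end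

section
/- Let n ≥ 2. There is a constant C = C(n) > 0 such that for every f ∈ L²_{loc}(ℝⁿ) with ‖f‖_{L_{2,n−2}} < ∞ and every t > 0, the heat extension e^{tΔ}f(x) is defined for every x and satisfies sup_{x∈ℝⁿ} |e^{tΔ}f(x)| ≤ C t^{−1/2} ‖f‖_{L_{2,n−2}}. -/
open MeasureTheory Metric Real
open scoped ENNReal NNReal

noncomputable section

/-!
Around `x`, split space into the ball of radius `√t` and the dyadic shells
`2ᵏ√t ≤ |x - y| < 2ᵏ⁺¹√t`, on which the Gaussian is at most `exp (-4ᵏ/4)`. By Cauchy–Schwarz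
the Morrey norm bounds `∫_{B(x,r)} |f|` by `|B₁|^{1/2} r^{n-1} ‖f‖`, so the Gaussian integral of
`|f|` is at most `t^{(n-1)/2} ‖f‖` times a rapidly convergent series; the normalisation
`(4πt)^{-n/2}` turns this into `t^{-1/2} ‖f‖`.
-/

theorem setLIntegral_enorm_le_sq_rpow_mul_measure_rpow {α E : Type*} [MeasurableSpace α]
    [NormedAddCommGroup E] (μ : Measure α) (s : Set α) {f : α → E}
    (hf : AEStronglyMeasurable f (μ.restrict s)) :
    ∫⁻ y in s, ‖f y‖ₑ ∂μ ≤ (∫⁻ y in s, ‖f y‖ₑ ^ 2 ∂μ) ^ (1 / 2 : ℝ) * μ s ^ (1 / 2 : ℝ) := by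
  have h := eLpNorm_le_eLpNorm_mul_rpow_measure_univ (p := 1) (q := 2) one_le_two hf
  rw [eLpNorm_one_eq_lintegral_enorm, Measure.restrict_apply_univ] at h
  convert h using 2
  · rw [eLpNorm_eq_lintegral_rpow_enorm_toReal two_ne_zero ENNReal.ofNat_ne_top]
    simp
  · norm_num

theorem setLIntegral_ball_enorm_sq_rpow_le_morreyNorm {n : ℕ} (f : EuclideanSpace ℝ (Fin n) → ℂ)
    {r : ℝ} (hr : 0 < r) (x : EuclideanSpace ℝ (Fin n)) :
    (∫⁻ y in ball x r, ‖f y‖ₑ ^ 2) ^ (1 / 2 : ℝ) ≤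
      ENNReal.ofReal (r ^ (((n : ℝ) - 2) / 2)) * MorreyNorm n f := by
  set I := ∫⁻ y in ball x r, ‖f y‖ₑ ^ 2
  have hI : (ENNReal.ofReal (r ^ ((2 : ℝ) - n)) * I) ^ (1 / 2 : ℝ) ≤ MorreyNorm n f :=
    le_iSup₂_of_le r hr (le_iSup_of_le x le_rfl)
  have hcancel : ENNReal.ofReal (r ^ (((n : ℝ) - 2) / 2)) *
      ENNReal.ofReal (r ^ ((2 : ℝ) - n)) ^ (1 / 2 : ℝ) = 1 := by
    rw [ENNReal.ofReal_rpow_of_nonneg (by positivity) (by norm_num), ← Real.rpow_mul hr.le,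
      ← ENNReal.ofReal_mul (by positivity), ← Real.rpow_add hr]
    ring_nf
    simp
  calc I ^ (1 / 2 : ℝ)
      = ENNReal.ofReal (r ^ (((n : ℝ) - 2) / 2)) *
          (ENNReal.ofReal (r ^ ((2 : ℝ) - n)) * I) ^ (1 / 2 : ℝ) := by
        rw [ENNReal.mul_rpow_of_nonneg _ _ (by norm_num), ← mul_assoc, hcancel, one_mul]
    _ ≤ _ := by gcongr

theorem setLIntegral_ball_enorm_le_morreyNorm {n : ℕ} {f : EuclideanSpace ℝ (Fin n) → ℂ}
    (hf : Measurable f) {r : ℝ} (hr : 0 < r) (x : EuclideanSpace ℝ (Fin n)) :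
    ∫⁻ y in ball x r, ‖f y‖ₑ ≤ volume (ball (0 : EuclideanSpace ℝ (Fin n)) 1) ^ (1 / 2 : ℝ) *
      ENNReal.ofReal (r ^ ((n : ℝ) - 1)) * MorreyNorm n f := by
  have hvol : volume (ball x r) ^ (1 / 2 : ℝ) = ENNReal.ofReal (r ^ ((n : ℝ) / 2)) *
      volume (ball (0 : EuclideanSpace ℝ (Fin n)) 1) ^ (1 / 2 : ℝ) := by
    rw [Measure.addHaar_ball_of_pos _ x hr, finrank_euclideanSpace_fin,
      ENNReal.mul_rpow_of_nonneg _ _ (by norm_num),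
      ENNReal.ofReal_rpow_of_nonneg (by positivity) (by norm_num), ← Real.rpow_natCast,
      ← Real.rpow_mul hr.le]
    ring_nf
  calc ∫⁻ y in ball x r, ‖f y‖ₑ
      ≤ (∫⁻ y in ball x r, ‖f y‖ₑ ^ 2) ^ (1 / 2 : ℝ) * volume (ball x r) ^ (1 / 2 : ℝ) :=
        setLIntegral_enorm_le_sq_rpow_mul_measure_rpow _ _ hf.aestronglyMeasurable
    _ ≤ ENNReal.ofReal (r ^ (((n : ℝ) - 2) / 2)) * MorreyNorm n f *
          (ENNReal.ofReal (r ^ ((n : ℝ) / 2)) *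
            volume (ball (0 : EuclideanSpace ℝ (Fin n)) 1) ^ (1 / 2 : ℝ)) := by
        rw [hvol]
        gcongr
        exact setLIntegral_ball_enorm_sq_rpow_le_morreyNorm f hr x
    _ = volume (ball (0 : EuclideanSpace ℝ (Fin n)) 1) ^ (1 / 2 : ℝ) *
          (ENNReal.ofReal (r ^ (((n : ℝ) - 2) / 2)) * ENNReal.ofReal (r ^ ((n : ℝ) / 2))) *
          MorreyNorm n f := by ring
    _ = _ := by
        rw [← ENNReal.ofReal_mul (by positivity), ← Real.rpow_add hr]
        ring_nf

theorem exists_mem_ball_two_pow_and_exp_le {E : Type*} [SeminormedAddCommGroup E] {t : ℝ}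
    (ht : 0 < t) {x y : E} (hy : y ∉ ball x (√t)) :
    ∃ k : ℕ, y ∈ ball x (2 ^ (k + 1) * √t) ∧
      Real.exp (-‖x - y‖ ^ 2 / (4 * t)) ≤ Real.exp (-(2 ^ k) ^ 2 / 4) := by
  have hs : 0 < √t := Real.sqrt_pos.2 ht
  rw [mem_ball, not_lt] at hy
  obtain ⟨k, hk_le, hk_lt⟩ := exists_nat_pow_near ((one_le_div hs).2 hy) one_lt_two
  rw [le_div_iff₀ hs] at hk_le
  rw [div_lt_iff₀ hs] at hk_lt
  refine ⟨k, mem_ball.2 hk_lt, Real.exp_le_exp.2 ?_⟩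
  have hsq : (2 ^ k) ^ 2 * t ≤ ‖x - y‖ ^ 2 := by
    rw [← dist_eq_norm, dist_comm, ← Real.sq_sqrt ht.le, ← mul_pow]
    gcongr
  rw [div_le_div_iff₀ (by linarith) (by norm_num)]
  linarith

theorem lintegral_exp_mul_le_dyadic_tsum {E : Type*} [SeminormedAddCommGroup E] [MeasurableSpace E]
    [OpensMeasurableSpace E] (μ : Measure E) {g : E → ℝ≥0∞} (hg : Measurable g) {t : ℝ}
    (ht : 0 < t) (x : E) :
    ∫⁻ y, ENNReal.ofReal (Real.exp (-‖x - y‖ ^ 2 / (4 * t))) * g y ∂μ ≤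
      ∫⁻ y in ball x (√t), g y ∂μ +
        ∑' k : ℕ, ENNReal.ofReal (Real.exp (-(2 ^ k) ^ 2 / 4)) *
          ∫⁻ y in ball x (2 ^ (k + 1) * √t), g y ∂μ := by
  have hpointwise : ∀ y, ENNReal.ofReal (Real.exp (-‖x - y‖ ^ 2 / (4 * t))) * g y ≤
      (ball x (√t)).indicator g y + ∑' k : ℕ, ENNReal.ofReal (Real.exp (-(2 ^ k) ^ 2 / 4)) *
        (ball x (2 ^ (k + 1) * √t)).indicator g y := by
    intro y
    by_cases hy : y ∈ ball x (√t)
    · have hexp : ENNReal.ofReal (Real.exp (-‖x - y‖ ^ 2 / (4 * t))) ≤ 1 :=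
        ENNReal.ofReal_le_one.2 (Real.exp_le_one_iff.2
          (div_nonpos_of_nonpos_of_nonneg (by simp) (by positivity)))
      rw [Set.indicator_of_mem hy]
      exact (mul_le_of_le_one_left' hexp).trans le_self_add
    · obtain ⟨k, hk, hexp⟩ := exists_mem_ball_two_pow_and_exp_le ht hy
      calc ENNReal.ofReal (Real.exp (-‖x - y‖ ^ 2 / (4 * t))) * g y
          ≤ ENNReal.ofReal (Real.exp (-(2 ^ k) ^ 2 / 4)) *
              (ball x (2 ^ (k + 1) * √t)).indicator g y := by
            rw [Set.indicator_of_mem hk]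
            gcongr
        _ ≤ _ := ENNReal.le_tsum k
        _ ≤ _ := le_add_self
  calc ∫⁻ y, ENNReal.ofReal (Real.exp (-‖x - y‖ ^ 2 / (4 * t))) * g y ∂μ
      ≤ ∫⁻ y, ((ball x (√t)).indicator g y + ∑' k : ℕ,
          ENNReal.ofReal (Real.exp (-(2 ^ k) ^ 2 / 4)) *
            (ball x (2 ^ (k + 1) * √t)).indicator g y) ∂μ := lintegral_mono hpointwise
    _ = _ := by
      rw [lintegral_add_left (hg.indicator measurableSet_ball),
        lintegral_tsum fun k => ((hg.indicator measurableSet_ball).const_mul _).aemeasurable,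
        lintegral_indicator measurableSet_ball]
      simp_rw [lintegral_const_mul _ (hg.indicator measurableSet_ball),
        lintegral_indicator measurableSet_ball]

/-- Comes from `exp (q²/4) ≥ (q²/4)ⁿ⁺¹ / (n+1)!`. -/
def gaussianDyadicConst (n : ℕ) : ℝ := 2 ^ n * 4 ^ (n + 1) * ((n + 1).factorial : ℝ)

theorem gaussianDyadicConst_pos (n : ℕ) : 0 < gaussianDyadicConst n := by
  unfold gaussianDyadicConst
  positivity

theorem exp_neg_sq_mul_rpow_le {q : ℝ} (hq : 1 ≤ q) (n : ℕ) :
    Real.exp (-q ^ 2 / 4) * (2 * q) ^ ((n : ℝ) - 1) ≤ gaussianDyadicConst n / q := by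
  have hq0 : 0 < q := by linarith
  have hpow : (2 * q) ^ ((n : ℝ) - 1) ≤ 2 ^ n * q ^ n := by
    rw [← mul_pow, ← Real.rpow_natCast]
    exact Real.rpow_le_rpow_of_exponent_le (by linarith) (by linarith)
  have hfact := Real.pow_div_factorial_le_exp (x := q ^ 2 / 4) (by positivity) (n + 1)
  rw [div_le_iff₀ (by positivity)] at hfact
  have hexp : q ^ (n + 1) ≤ 4 ^ (n + 1) * ((n + 1).factorial : ℝ) * Real.exp (q ^ 2 / 4) :=
    calc q ^ (n + 1) ≤ (q ^ 2) ^ (n + 1) := by gcongr; nlinarith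
      _ = 4 ^ (n + 1) * (q ^ 2 / 4) ^ (n + 1) := by rw [← mul_pow, mul_div_cancel₀ _ four_ne_zero]
      _ ≤ 4 ^ (n + 1) * (Real.exp (q ^ 2 / 4) * ((n + 1).factorial : ℝ)) := by gcongr
      _ = _ := by ring
  rw [le_div_iff₀ hq0, gaussianDyadicConst, neg_div, Real.exp_neg]
  calc (Real.exp (q ^ 2 / 4))⁻¹ * (2 * q) ^ ((n : ℝ) - 1) * q
      ≤ (Real.exp (q ^ 2 / 4))⁻¹ * (2 ^ n * q ^ n) * q := by gcongr
    _ = 2 ^ n * q ^ (n + 1) / Real.exp (q ^ 2 / 4) := by ring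
    _ ≤ 2 ^ n * (4 ^ (n + 1) * ((n + 1).factorial : ℝ) * Real.exp (q ^ 2 / 4)) /
          Real.exp (q ^ 2 / 4) := by gcongr
    _ = 2 ^ n * 4 ^ (n + 1) * ((n + 1).factorial : ℝ) := by field_simp

theorem exp_mul_setLIntegral_ball_two_pow_le {n : ℕ} {f : EuclideanSpace ℝ (Fin n) → ℂ}
    (hf : Measurable f) {s : ℝ} (hs : 0 < s) (x : EuclideanSpace ℝ (Fin n)) (k : ℕ) :
    ENNReal.ofReal (Real.exp (-(2 ^ k) ^ 2 / 4)) * ∫⁻ y in ball x (2 ^ (k + 1) * s), ‖f y‖ₑ ≤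
      volume (ball (0 : EuclideanSpace ℝ (Fin n)) 1) ^ (1 / 2 : ℝ) * MorreyNorm n f *
        ENNReal.ofReal (gaussianDyadicConst n * s ^ ((n : ℝ) - 1)) * 2⁻¹ ^ k := by
  set V := volume (ball (0 : EuclideanSpace ℝ (Fin n)) 1) ^ (1 / 2 : ℝ)
  have hreal : Real.exp (-(2 ^ k) ^ 2 / 4) * (2 ^ (k + 1) * s) ^ ((n : ℝ) - 1) ≤
      gaussianDyadicConst n * s ^ ((n : ℝ) - 1) * 2⁻¹ ^ k :=
    calc Real.exp (-(2 ^ k) ^ 2 / 4) * (2 ^ (k + 1) * s) ^ ((n : ℝ) - 1)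
        = Real.exp (-(2 ^ k) ^ 2 / 4) * (2 * 2 ^ k) ^ ((n : ℝ) - 1) * s ^ ((n : ℝ) - 1) := by
          rw [Real.mul_rpow (by positivity) hs.le, pow_succ' (2 : ℝ) k]
          ring
      _ ≤ gaussianDyadicConst n / 2 ^ k * s ^ ((n : ℝ) - 1) := by
          gcongr
          exact exp_neg_sq_mul_rpow_le (one_le_pow₀ one_le_two) n
      _ = _ := by rw [inv_pow]; ring
  have hD := gaussianDyadicConst_pos n
  calc ENNReal.ofReal (Real.exp (-(2 ^ k) ^ 2 / 4)) * ∫⁻ y in ball x (2 ^ (k + 1) * s), ‖f y‖ₑ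
      ≤ ENNReal.ofReal (Real.exp (-(2 ^ k) ^ 2 / 4)) *
          (V * ENNReal.ofReal ((2 ^ (k + 1) * s) ^ ((n : ℝ) - 1)) * MorreyNorm n f) := by
        gcongr
        exact setLIntegral_ball_enorm_le_morreyNorm hf (by positivity) x
    _ = V * MorreyNorm n f * ENNReal.ofReal
          (Real.exp (-(2 ^ k) ^ 2 / 4) * (2 ^ (k + 1) * s) ^ ((n : ℝ) - 1)) := by
        rw [ENNReal.ofReal_mul (Real.exp_nonneg _)]
        ring
    _ ≤ V * MorreyNorm n f *
          ENNReal.ofReal (gaussianDyadicConst n * s ^ ((n : ℝ) - 1) * 2⁻¹ ^ k) := by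
        gcongr
    _ = _ := by
        rw [ENNReal.ofReal_mul (by positivity), ENNReal.ofReal_pow (by norm_num),
          ENNReal.ofReal_inv_of_pos two_pos, ENNReal.ofReal_ofNat]
        ring

theorem lintegral_exp_mul_enorm_le_morreyNorm {n : ℕ} {f : EuclideanSpace ℝ (Fin n) → ℂ}
    (hf : Measurable f) {t : ℝ} (ht : 0 < t) (x : EuclideanSpace ℝ (Fin n)) :
    ∫⁻ y, ENNReal.ofReal (Real.exp (-‖x - y‖ ^ 2 / (4 * t))) * ‖f y‖ₑ ≤
      volume (ball (0 : EuclideanSpace ℝ (Fin n)) 1) ^ (1 / 2 : ℝ) *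
        ENNReal.ofReal ((1 + 2 * gaussianDyadicConst n) * √t ^ ((n : ℝ) - 1)) *
          MorreyNorm n f := by
  set V := volume (ball (0 : EuclideanSpace ℝ (Fin n)) 1) ^ (1 / 2 : ℝ)
  set D := gaussianDyadicConst n
  have hD := gaussianDyadicConst_pos n
  have hs : 0 < √t := Real.sqrt_pos.2 ht
  calc ∫⁻ y, ENNReal.ofReal (Real.exp (-‖x - y‖ ^ 2 / (4 * t))) * ‖f y‖ₑ
      ≤ (∫⁻ y in ball x (√t), ‖f y‖ₑ) + ∑' k : ℕ, ENNReal.ofReal (Real.exp (-(2 ^ k) ^ 2 / 4)) *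
          ∫⁻ y in ball x (2 ^ (k + 1) * √t), ‖f y‖ₑ :=
        lintegral_exp_mul_le_dyadic_tsum volume hf.enorm ht x
    _ ≤ V * ENNReal.ofReal (√t ^ ((n : ℝ) - 1)) * MorreyNorm n f +
          ∑' k : ℕ, V * MorreyNorm n f * ENNReal.ofReal (D * √t ^ ((n : ℝ) - 1)) * 2⁻¹ ^ k :=
        add_le_add (setLIntegral_ball_enorm_le_morreyNorm hf hs x)
          (ENNReal.tsum_le_tsum (exp_mul_setLIntegral_ball_two_pow_le hf hs x))
    _ = V * (ENNReal.ofReal (√t ^ ((n : ℝ) - 1)) +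
          2 * ENNReal.ofReal (D * √t ^ ((n : ℝ) - 1))) * MorreyNorm n f := by
        rw [ENNReal.tsum_mul_left, ENNReal.tsum_geometric, ENNReal.one_sub_inv_two, inv_inv]
        ring
    _ = _ := by
        rw [← ENNReal.ofReal_ofNat 2, ← ENNReal.ofReal_mul zero_le_two,
          ← ENNReal.ofReal_add (by positivity) (by positivity)]
        ring_nf

theorem volume_ball_rpow_ne_top (n : ℕ) (x : EuclideanSpace ℝ (Fin n)) (r : ℝ) :
    volume (ball x r) ^ (1 / 2 : ℝ) ≠ ⊤ :=
  ENNReal.rpow_ne_top_of_nonneg (by norm_num) measure_ball_lt_top.ne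

def heatMorreyConst (n : ℕ) : ℝ :=
  (volume (ball (0 : EuclideanSpace ℝ (Fin n)) 1) ^ (1 / 2 : ℝ)).toReal *
    (4 * π) ^ (-(n : ℝ) / 2) * (1 + 2 * gaussianDyadicConst n)

theorem heatMorreyConst_pos (n : ℕ) : 0 < heatMorreyConst n := by
  have hV : 0 < (volume (ball (0 : EuclideanSpace ℝ (Fin n)) 1) ^ (1 / 2 : ℝ)).toReal :=
    ENNReal.toReal_pos (ENNReal.rpow_pos (measure_ball_pos _ _ one_pos)
      measure_ball_lt_top.ne).ne' (volume_ball_rpow_ne_top n 0 1)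
  have hD := gaussianDyadicConst_pos n
  unfold heatMorreyConst
  positivity

theorem lintegral_enorm_heatKernel_smul_le {n : ℕ} {f : EuclideanSpace ℝ (Fin n) → ℂ}
    (hf : Measurable f) {t : ℝ} (ht : 0 < t) (x : EuclideanSpace ℝ (Fin n)) :
    ∫⁻ y, ‖((4 * π * t) ^ (-(n : ℝ) / 2) * Real.exp (-‖x - y‖ ^ 2 / (4 * t))) • f y‖ₑ ≤
      ENNReal.ofReal (heatMorreyConst n * t ^ (-(1 : ℝ) / 2)) * MorreyNorm n f := by
  have hpow : (4 * π * t) ^ (-(n : ℝ) / 2) * √t ^ ((n : ℝ) - 1) =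
      (4 * π) ^ (-(n : ℝ) / 2) * t ^ (-(1 : ℝ) / 2) := by
    rw [Real.mul_rpow (by positivity) ht.le, Real.sqrt_eq_rpow, ← Real.rpow_mul ht.le,
      mul_assoc, ← Real.rpow_add ht]
    ring_nf
  set c := (4 * π * t) ^ (-(n : ℝ) / 2)
  set V := volume (ball (0 : EuclideanSpace ℝ (Fin n)) 1) ^ (1 / 2 : ℝ)
  set B := 1 + 2 * gaussianDyadicConst n
  have hB : 0 ≤ B := by linarith [gaussianDyadicConst_pos n]
  have hc : 0 ≤ c := by positivity
  have hnorm : ∀ y, ‖(c * Real.exp (-‖x - y‖ ^ 2 / (4 * t))) • f y‖ₑ =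
      ENNReal.ofReal c * (ENNReal.ofReal (Real.exp (-‖x - y‖ ^ 2 / (4 * t))) * ‖f y‖ₑ) := by
    intro y
    rw [enorm_smul, Real.enorm_eq_ofReal (by positivity), ENNReal.ofReal_mul hc, mul_assoc]
  simp_rw [hnorm]
  rw [lintegral_const_mul _ (by fun_prop)]
  calc ENNReal.ofReal c * ∫⁻ y, ENNReal.ofReal (Real.exp (-‖x - y‖ ^ 2 / (4 * t))) * ‖f y‖ₑ
      ≤ ENNReal.ofReal c * (V * ENNReal.ofReal (B * √t ^ ((n : ℝ) - 1)) * MorreyNorm n f) := by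
        gcongr
        exact lintegral_exp_mul_enorm_le_morreyNorm hf ht x
    _ = ENNReal.ofReal (V.toReal * B * (c * √t ^ ((n : ℝ) - 1))) * MorreyNorm n f := by
        rw [ENNReal.ofReal_mul hB, ENNReal.ofReal_mul (mul_nonneg ENNReal.toReal_nonneg hB),
          ENNReal.ofReal_mul ENNReal.toReal_nonneg, ENNReal.ofReal_mul hc,
          ENNReal.ofReal_toReal (volume_ball_rpow_ne_top n 0 1)]
        ring
    _ = _ := by
        rw [hpow]
        simp only [heatMorreyConst, V, B]
        ring_nf

theorem heat_ext_sup_bound_general (n : ℕ) :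
    ∃ C > (0 : ℝ), ∀ f : EuclideanSpace ℝ (Fin n) → ℂ,
      Measurable f → LocallyIntegrable (fun y => ‖f y‖ ^ 2) volume →
      MorreyNorm n f ≠ ⊤ → ∀ t > (0 : ℝ), ∀ x : EuclideanSpace ℝ (Fin n),
        Integrable (fun y =>
          ((4 * π * t) ^ (-(n : ℝ) / 2) * Real.exp (-‖x - y‖ ^ 2 / (4 * t))) • f y) ∧
        (‖heatExt n f t x‖₊ : ℝ≥0∞) ≤
          ENNReal.ofReal (C * t ^ (-(1 : ℝ) / 2)) * MorreyNorm n f := by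
  refine ⟨heatMorreyConst n, heatMorreyConst_pos n, fun f hf _ hM t ht x => ?_⟩
  have hbound := lintegral_enorm_heatKernel_smul_le hf ht x
  have hmeas : Measurable fun y =>
      ((4 * π * t) ^ (-(n : ℝ) / 2) * Real.exp (-‖x - y‖ ^ 2 / (4 * t))) • f y := by fun_prop
  exact ⟨⟨hmeas.aestronglyMeasurable,
      hbound.trans_lt (ENNReal.mul_lt_top ENNReal.ofReal_lt_top hM.lt_top)⟩,
    (enorm_integral_le_lintegral_enorm _).trans hbound⟩

/-- For `f` with finite square Morrey norm and `t > 0`, the heat extension is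
defined everywhere and `sup_x |e^{tΔ}f(x)| ≤ C t^{−1/2} ‖f‖_{L_{2,n−2}}`. -/
theorem heat_ext_sup_bound (n : ℕ) (hn : 2 ≤ n) :
    ∃ C > (0 : ℝ), ∀ f : EuclideanSpace ℝ (Fin n) → ℂ,
      Measurable f → LocallyIntegrable (fun y => ‖f y‖ ^ 2) volume →
      MorreyNorm n f ≠ ⊤ → ∀ t > (0 : ℝ), ∀ x : EuclideanSpace ℝ (Fin n),
        Integrable (fun y =>
          ((4 * π * t) ^ (-(n : ℝ) / 2) * Real.exp (-‖x - y‖ ^ 2 / (4 * t))) • f y) ∧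
        (‖heatExt n f t x‖₊ : ℝ≥0∞) ≤
          ENNReal.ofReal (C * t ^ (-(1 : ℝ) / 2)) * MorreyNorm n f :=
  heat_ext_sup_bound_general n
end
end

section
/- Let n ≥ 2, α ∈ [0,1) and p > n with n > αp. There is a constant C = C(n,p,α) > 0 with the following property: if f : ℝⁿ → ℂ is measurable, its heat extension e^{tΔ}f is defined a.e. for every t > 0, and A = sup_{t>0} t^{(p−n)/(2p)} ‖e^{tΔ}f‖_{L^p(ℝⁿ)} < ∞, then ‖f‖_{Q_α^{-1}} ≤ C A. In particular the homogeneous Besov space Ḃ_{p,∞}^{−1+n/p} embeds into Q_α^{-1}. -/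
open MeasureTheory Metric Real
open scoped ENNReal NNReal

noncomputable section

/-- The `Q_α^{-1}` norm of `f`. -/
def QinvNorm (n : ℕ) (α : ℝ) (f : EuclideanSpace ℝ (Fin n) → ℂ) : ℝ≥0∞ :=
  ⨆ (r : ℝ) (_ : 0 < r) (x : EuclideanSpace ℝ (Fin n)),
    (ENNReal.ofReal (r ^ (2 * α - (n : ℝ))) *
      ∫⁻ t in Set.Ioo (0 : ℝ) (r ^ 2),
        (∫⁻ y in Metric.ball x r, (‖heatExt n f t y‖₊ : ℝ≥0∞) ^ 2) *
          ENNReal.ofReal (t ^ (-α))) ^ (1 / 2 : ℝ)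

open Set Module

/-! Only the decay `‖e^{tΔ}f‖_{L^p} ≤ A t^{-(p-n)/(2p)}` of the heat extension enters. On the
box `(0, r²) × B(x, r)`, Hölder's inequality bounds the `L²(B(x, r))` mass at time `t` by
`A² t^{-(p-n)/p} |B(x, r)|^{1-2/p}`; the resulting time integral against `t^{-α}` converges at
`t = 0` exactly because `αp < n`, and all powers of `r` cancel against the prefactor `r^{2α-n}`. -/

theorem setLIntegral_enorm_sq_le_eLpNorm_sq_mul {X F : Type*} [MeasurableSpace X]
    [NormedAddCommGroup F] {μ : Measure X} {u : X → F} (hu : AEStronglyMeasurable u μ)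
    {p : ℝ} (hp : 2 ≤ p) (s : Set X) :
    ∫⁻ y in s, ‖u y‖ₑ ^ 2 ∂μ ≤ eLpNorm u (ENNReal.ofReal p) μ ^ 2 * μ s ^ (1 - 2 / p) := by
  have hp₀ : 0 < p := by linarith
  have hL2 : ∫⁻ y in s, ‖u y‖ₑ ^ 2 ∂μ = eLpNorm u 2 (μ.restrict s) ^ 2 := by
    simpa using (eLpNorm_nnreal_pow_eq_lintegral (f := u) (μ := μ.restrict s)
      (p := 2) two_ne_zero).symm
  have hHolder : eLpNorm u 2 (μ.restrict s) ≤
      eLpNorm u (ENNReal.ofReal p) μ * μ s ^ (1 / 2 - 1 / p) := by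
    have h := eLpNorm_le_eLpNorm_mul_rpow_measure_univ (μ := μ.restrict s)
      (ENNReal.ofNat_le_ofReal.mpr hp) hu.restrict
    rw [ENNReal.toReal_ofReal hp₀.le, ENNReal.toReal_ofNat, Measure.restrict_apply_univ] at h
    exact h.trans (by gcongr ?_ * _; exact eLpNorm_mono_measure u Measure.restrict_le_self)
  rw [hL2]
  calc eLpNorm u 2 (μ.restrict s) ^ 2
      ≤ (eLpNorm u (ENNReal.ofReal p) μ * μ s ^ (1 / 2 - 1 / p)) ^ 2 := by gcongr
    _ = eLpNorm u (ENNReal.ofReal p) μ ^ 2 * μ s ^ (1 - 2 / p) := by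
      rw [mul_pow, ← ENNReal.rpow_mul_natCast]
      ring_nf

theorem lintegral_Ioo_ofReal_rpow {β : ℝ} (hβ : -1 < β) {R : ℝ} (hR : 0 ≤ R) :
    ∫⁻ t in Ioo 0 R, ENNReal.ofReal (t ^ β) = ENNReal.ofReal (R ^ (β + 1) / (β + 1)) := by
  have hint : IntegrableOn (fun t : ℝ => t ^ β) (Ioc 0 R) := by
    simpa [intervalIntegrable_iff, uIoc_of_le hR] using
      intervalIntegral.intervalIntegrable_rpow' (a := 0) (b := R) hβ
  rw [restrict_Ioo_eq_restrict_Ioc, ← ofReal_integral_eq_lintegral_ofReal hint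
    (ae_restrict_of_forall_mem measurableSet_Ioc fun t ht => Real.rpow_nonneg ht.1.le β),
    ← intervalIntegral.integral_of_le hR, integral_rpow (Or.inl hβ),
    Real.zero_rpow (by linarith), sub_zero]

theorem setLIntegral_enorm_sq_mul_rpow_le {X F : Type*} [MeasurableSpace X]
    [NormedAddCommGroup F] {μ : Measure X} {u : X → F} (hu : AEStronglyMeasurable u μ)
    {p : ℝ} (hp : 2 ≤ p) (s : Set X) {t γ α : ℝ} (ht : 0 < t) {A : ℝ≥0∞}
    (hA : ENNReal.ofReal (t ^ γ) * eLpNorm u (ENNReal.ofReal p) μ ≤ A) :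
    (∫⁻ y in s, ‖u y‖ₑ ^ 2 ∂μ) * ENNReal.ofReal (t ^ (-α)) ≤
      A ^ 2 * μ s ^ (1 - 2 / p) * ENNReal.ofReal (t ^ (-α - 2 * γ)) := by
  have hsplit : ENNReal.ofReal (t ^ (-α)) =
      ENNReal.ofReal (t ^ γ) ^ 2 * ENNReal.ofReal (t ^ (-α - 2 * γ)) := by
    rw [← ENNReal.ofReal_pow (by positivity), ← ENNReal.ofReal_mul (by positivity),
      ← Real.rpow_mul_natCast ht.le, ← Real.rpow_add ht]
    ring_nf
  calc (∫⁻ y in s, ‖u y‖ₑ ^ 2 ∂μ) * ENNReal.ofReal (t ^ (-α))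
      ≤ eLpNorm u (ENNReal.ofReal p) μ ^ 2 * μ s ^ (1 - 2 / p) *
          (ENNReal.ofReal (t ^ γ) ^ 2 * ENNReal.ofReal (t ^ (-α - 2 * γ))) := by
        rw [hsplit]
        gcongr
        exact setLIntegral_enorm_sq_le_eLpNorm_sq_mul hu hp s
    _ = (ENNReal.ofReal (t ^ γ) * eLpNorm u (ENNReal.ofReal p) μ) ^ 2 * μ s ^ (1 - 2 / p) *
          ENNReal.ofReal (t ^ (-α - 2 * γ)) := by ring
    _ ≤ A ^ 2 * μ s ^ (1 - 2 / p) * ENNReal.ofReal (t ^ (-α - 2 * γ)) := by gcongr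

theorem carlesonBox_scaling {r d p α v : ℝ} (hr : 0 < r) (hv : 0 ≤ v) (hp : p ≠ 0) :
    r ^ (2 * α - d) * (r ^ d * v) ^ (1 - 2 / p) * ((r ^ 2) ^ (d / p - α) / (d / p - α)) =
      v ^ (1 - 2 / p) / (d / p - α) := by
  have hr_pow : r ^ (2 * α - d) * r ^ (d * (1 - 2 / p)) * r ^ ((2 : ℕ) * (d / p - α)) = 1 := by
    rw [← Real.rpow_add hr, ← Real.rpow_add hr]
    convert Real.rpow_zero r using 2
    field_simp
    ring
  rw [Real.mul_rpow (by positivity) hv, ← Real.rpow_mul hr.le, ← Real.rpow_natCast_mul hr.le]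
  calc _ = r ^ (2 * α - d) * r ^ (d * (1 - 2 / p)) * r ^ ((2 : ℕ) * (d / p - α)) *
        v ^ (1 - 2 / p) / (d / p - α) := by ring
    _ = _ := by rw [hr_pow, one_mul]

section CarlesonBox

variable {E F : Type*} [NormedAddCommGroup E] [NormedSpace ℝ E] [FiniteDimensional ℝ E]
  [MeasurableSpace E] [BorelSpace E] (μ : Measure E) [μ.IsAddHaarMeasure] [NormedAddCommGroup F]

theorem lintegral_carlesonBox_le {p α : ℝ} (hp : 2 ≤ p) (hαp : α * p < finrank ℝ E)
    {u : ℝ → E → F} (hu : ∀ t > 0, AEStronglyMeasurable (u t) μ) {A : ℝ≥0∞}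
    (hA : ∀ t > 0, ENNReal.ofReal (t ^ ((p - finrank ℝ E) / (2 * p))) *
      eLpNorm (u t) (ENNReal.ofReal p) μ ≤ A)
    {r : ℝ} (hr : 0 < r) (x : E) :
    ENNReal.ofReal (r ^ (2 * α - finrank ℝ E)) *
        ∫⁻ t in Ioo 0 (r ^ 2), (∫⁻ y in ball x r, ‖u t y‖ₑ ^ 2 ∂μ) * ENNReal.ofReal (t ^ (-α)) ≤
      ENNReal.ofReal ((μ (ball 0 1)).toReal ^ (1 - 2 / p) / (finrank ℝ E / p - α)) * A ^ 2 := by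
  set d : ℝ := (finrank ℝ E : ℝ)
  set v : ℝ := (μ (ball 0 1)).toReal
  set β : ℝ := d / p - α - 1 with hβ_def
  have hp₀ : 0 < p := by linarith
  have hexp : 0 ≤ 1 - 2 / p := by
    rw [sub_nonneg, div_le_one hp₀]
    exact hp
  have hβ : -1 < β := by
    have : α < d / p := (lt_div_iff₀ hp₀).mpr hαp
    linarith
  have hball : μ (ball x r) = ENNReal.ofReal (r ^ d * v) := by
    rw [Measure.addHaar_ball_of_pos μ x hr, ENNReal.ofReal_mul (by positivity),
      ENNReal.ofReal_toReal measure_ball_lt_top.ne, Real.rpow_natCast]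
  have hslice : ∀ t ∈ Ioo 0 (r ^ 2),
      (∫⁻ y in ball x r, ‖u t y‖ₑ ^ 2 ∂μ) * ENNReal.ofReal (t ^ (-α)) ≤
        A ^ 2 * ENNReal.ofReal ((r ^ d * v) ^ (1 - 2 / p)) * ENNReal.ofReal (t ^ β) := by
    intro t ht
    have h := setLIntegral_enorm_sq_mul_rpow_le (hu t ht.1) hp (ball x r) (α := α) ht.1
      (hA t ht.1)
    rwa [hball, ENNReal.ofReal_rpow_of_nonneg (by positivity) hexp,
      show -α - 2 * ((p - d) / (2 * p)) = β by rw [hβ_def]; field_simp; ring] at h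
  calc ENNReal.ofReal (r ^ (2 * α - d)) *
        ∫⁻ t in Ioo 0 (r ^ 2), (∫⁻ y in ball x r, ‖u t y‖ₑ ^ 2 ∂μ) * ENNReal.ofReal (t ^ (-α))
      ≤ ENNReal.ofReal (r ^ (2 * α - d)) * ∫⁻ t in Ioo 0 (r ^ 2),
          A ^ 2 * ENNReal.ofReal ((r ^ d * v) ^ (1 - 2 / p)) * ENNReal.ofReal (t ^ β) := by
        gcongr ENNReal.ofReal _ * ?_
        exact setLIntegral_mono (by fun_prop) hslice
    _ = ENNReal.ofReal (r ^ (2 * α - d) * (r ^ d * v) ^ (1 - 2 / p) *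
          ((r ^ 2) ^ (β + 1) / (β + 1))) * A ^ 2 := by
        rw [lintegral_const_mul _ (by fun_prop), lintegral_Ioo_ofReal_rpow hβ (by positivity),
          ENNReal.ofReal_mul (by positivity), ENNReal.ofReal_mul (by positivity)]
        ring
    _ = _ := by
        rw [show β + 1 = d / p - α by rw [hβ_def]; ring,
          carlesonBox_scaling hr (by positivity) hp₀.ne']

end CarlesonBox

theorem measurable_heatExt {n : ℕ} {f : EuclideanSpace ℝ (Fin n) → ℂ} (hf : Measurable f)
    (t : ℝ) : Measurable (heatExt n f t) := by
  have hkernel : Measurable fun q : EuclideanSpace ℝ (Fin n) × EuclideanSpace ℝ (Fin n) =>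
      ((4 * π * t) ^ (-(n : ℝ) / 2) * Real.exp (-‖q.1 - q.2‖ ^ 2 / (4 * t))) • f q.2 :=
    (by fun_prop : Continuous fun q : EuclideanSpace ℝ (Fin n) × EuclideanSpace ℝ (Fin n) =>
      (4 * π * t) ^ (-(n : ℝ) / 2) * Real.exp (-‖q.1 - q.2‖ ^ 2 / (4 * t))).measurable.smul
      (hf.comp measurable_snd)
  exact hkernel.stronglyMeasurable.integral_prod_right'.measurable

theorem besov_subset_Qinv_general (n : ℕ) (hn : 2 ≤ n) (α : ℝ)
    (p : ℝ) (hp : (n : ℝ) < p) (hαp : α * p < (n : ℝ)) :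
    ∃ C > (0 : ℝ), ∀ f : EuclideanSpace ℝ (Fin n) → ℂ,
      Measurable f →
      (∀ t > (0 : ℝ), ∀ᵐ x : EuclideanSpace ℝ (Fin n),
        Integrable (fun y =>
          ((4 * π * t) ^ (-(n : ℝ) / 2) * Real.exp (-‖x - y‖ ^ 2 / (4 * t))) • f y)) →
      ∀ A : ℝ≥0∞,
        A = (⨆ (t : ℝ) (_ : 0 < t),
          ENNReal.ofReal (t ^ ((p - (n : ℝ)) / (2 * p))) *
            eLpNorm (heatExt n f t) (ENNReal.ofReal p) volume) →
        A ≠ ⊤ →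
        QinvNorm n α f ≤ ENNReal.ofReal C * A := by
  have hp₂ : (2 : ℝ) ≤ p := le_trans (by exact_mod_cast hn) hp.le
  set c := (volume (ball (0 : EuclideanSpace ℝ (Fin n)) 1)).toReal ^ (1 - 2 / p) / (n / p - α)
  have hc : 0 < c := by
    have hv : 0 < (volume (ball (0 : EuclideanSpace ℝ (Fin n)) 1)).toReal :=
      ENNReal.toReal_pos (measure_ball_pos _ _ one_pos).ne' measure_ball_lt_top.ne
    have hα : 0 < n / p - α := sub_pos.mpr ((lt_div_iff₀ (by linarith)).mpr hαp)
    positivity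
  refine ⟨√c, Real.sqrt_pos.mpr hc, fun f hf _ A hA _ => iSup₂_le fun r hr => iSup_le fun x => ?_⟩
  have hd : (finrank ℝ (EuclideanSpace ℝ (Fin n)) : ℝ) = n := by simp
  have hbox := lintegral_carlesonBox_le volume hp₂ (hd ▸ hαp)
    (fun t _ => (measurable_heatExt hf t).aestronglyMeasurable)
    (fun t ht => hd ▸ hA ▸ le_iSup₂_of_le t ht le_rfl) hr x
  rw [hd] at hbox
  calc _ ≤ (ENNReal.ofReal c * A ^ 2) ^ (1 / 2 : ℝ) := ENNReal.rpow_le_rpow hbox (by norm_num)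
    _ = ENNReal.ofReal √c * A := by
      rw [ENNReal.mul_rpow_of_nonneg _ _ (by norm_num), ENNReal.ofReal_rpow_of_nonneg hc.le
        (by norm_num), ← Real.sqrt_eq_rpow, ← ENNReal.rpow_natCast, ← ENNReal.rpow_mul]
      norm_num

/-- The homogeneous Besov space `Ḃ_{p,∞}^{−1+n/p}`, characterized by
`A = sup_{t>0} t^{(p−n)/(2p)} ‖e^{tΔ}f‖_{L^p} < ∞`, embeds into `Q_α^{-1}`
when `p > n > αp`, `α ∈ [0,1)`. -/
theorem besov_subset_Qinv (n : ℕ) (hn : 2 ≤ n) (α : ℝ) (hα0 : 0 ≤ α) (hα1 : α < 1)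
    (p : ℝ) (hp : (n : ℝ) < p) (hαp : α * p < (n : ℝ)) :
    ∃ C > (0 : ℝ), ∀ f : EuclideanSpace ℝ (Fin n) → ℂ,
      Measurable f →
      (∀ t > (0 : ℝ), ∀ᵐ x : EuclideanSpace ℝ (Fin n),
        Integrable (fun y =>
          ((4 * π * t) ^ (-(n : ℝ) / 2) * Real.exp (-‖x - y‖ ^ 2 / (4 * t))) • f y)) →
      ∀ A : ℝ≥0∞,
        A = (⨆ (t : ℝ) (_ : 0 < t),
          ENNReal.ofReal (t ^ ((p - (n : ℝ)) / (2 * p))) *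
            eLpNorm (heatExt n f t) (ENNReal.ofReal p) volume) →
        A ≠ ⊤ →
        QinvNorm n α f ≤ ENNReal.ofReal C * A :=
  besov_subset_Qinv_general n hn α p hp hαp
end
end
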